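/- For all integers s ≥ 1 and m ≥ 2 with t = 2m − 1, the domination number of H(t,s) equals m: every dominating set of H(t,s) has at least m vertices, and every m-element subset of V(T) is a dominating set of H(t,s). -/

import Mathlib

/-!
An `m`-subset `X` of `V(T)` dominates `T`, and it dominates every `K_Y` because two `m`-subsets
of a `(2m - 1)`-set intersect. Conversely, let `A` dominate and let `k` be the number of its
vertices in `T`. For each of the `C(2m - 1 - k, m)` sets `X` avoiding `A ∩ V(T)`, a vertex of
`K_X` outside `X` can only be dominated from `K_X \ X`, so `A` has at least
`C(2m - 1 - k, m) ≥ m - k` vertices outside `T` whenever `k < m`.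
-/

/-- The vertex set of the graph `H(t,s)` (with `m`-subsets of the `t`-clique used as
attachment sets): the `t` vertices of the complete graph `T` together with, for each
`m`-subset `X` of `V(T)`, the `s` vertices of `K_X` not identified with `X`. -/
def HVert (t m s : ℕ) : Type :=
  Fin t ⊕ ({X : Finset (Fin t) // X.card = m} × Fin s)

/-- The graph `H(t,s)`: a complete graph `T` on `t` vertices, and for each `m`-subset
`X` of `V(T)` a complete graph `K_X` on `s + m` vertices, with `m` of the vertices of
`K_X` identified with `X`. -/
def HGraph (t m s : ℕ) : SimpleGraph (HVert t m s) :=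
  SimpleGraph.fromRel (fun a b =>
    match a, b with
    | Sum.inl _, Sum.inl _ => True
    | Sum.inl x, Sum.inr q => x ∈ q.1.1
    | Sum.inr _, Sum.inl _ => False
    | Sum.inr q, Sum.inr r => q.1 = r.1)

/-- `A` is a dominating set of `G`: every vertex is in `A` or adjacent to a vertex
of `A`. -/
def IsDominatingSet {W : Type*} (G : SimpleGraph W) (A : Set W) : Prop :=
  ∀ v, v ∈ A ∨ ∃ a ∈ A, G.Adj a v

instance (t m s : ℕ) : DecidableEq (HVert t m s) := by
  unfold HVert; infer_instance

open Finset

lemma Nat.add_one_le_choose_add (a : ℕ) {m : ℕ} (hm : 1 ≤ m) : a + 1 ≤ (a + m).choose m :=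
  calc a + 1 = (a + 1).choose a := (Nat.choose_succ_self_right a).symm
    _ ≤ (a + m).choose a := Nat.choose_le_choose a (by omega)
    _ = (a + m).choose m := Nat.choose_symm_add

namespace HGraph

variable {t m s : ℕ}

@[simp]
lemma adj_inl_inl {x y : Fin t} : (HGraph t m s).Adj (.inl x) (.inl y) ↔ x ≠ y :=
  (SimpleGraph.fromRel_adj _ _ _).trans <|
    (and_iff_left (.inl trivial)).trans Sum.inl_injective.ne_iff

@[simp]
lemma adj_inl_inr {x : Fin t} {q : {X : Finset (Fin t) // #X = m} × Fin s} :
    (HGraph t m s).Adj (.inl x) (.inr q) ↔ x ∈ q.1.1 :=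
  (SimpleGraph.fromRel_adj _ _ _).trans <|
    (and_iff_right Sum.inl_ne_inr).trans (or_iff_left not_false)

@[simp]
lemma adj_inr_inr {q r : {X : Finset (Fin t) // #X = m} × Fin s} :
    (HGraph t m s).Adj (.inr q) (.inr r) ↔ q ≠ r ∧ q.1 = r.1 :=
  (SimpleGraph.fromRel_adj _ _ _).trans <|
    Iff.and Sum.inr_injective.ne_iff (or_iff_left_of_imp Eq.symm)

lemma isDominatingSet_inl {X : Finset (Fin t)} (hX : #X = m) (hm : 0 < m) (ht : t < 2 * m) :
    IsDominatingSet (HGraph t m s) {v | ∃ x ∈ X, v = .inl x} := by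
  rintro (y | ⟨⟨Y, hY⟩, i⟩)
  · by_cases hy : y ∈ X
    · exact .inl ⟨y, hy, rfl⟩
    · obtain ⟨x, hx⟩ := card_pos.1 (hX ▸ hm)
      exact .inr ⟨.inl x, ⟨x, hx, rfl⟩, adj_inl_inl.2 (ne_of_mem_of_not_mem hx hy)⟩
  · obtain ⟨x, hx⟩ := inter_nonempty_of_card_lt_card_add_card (subset_univ X) (subset_univ Y)
      (by simp only [card_univ, Fintype.card_fin]; omega)
    exact .inr ⟨.inl x, ⟨x, (mem_inter.1 hx).1, rfl⟩, adj_inl_inr.2 (mem_inter.1 hx).2⟩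

lemma mem_image_toRight_of_isDominatingSet (hs : 0 < s) {A : Finset (HVert t m s)}
    (hA : IsDominatingSet (HGraph t m s) ↑A) {X : Finset (Fin t)} (hX : #X = m)
    (hXA : Disjoint X A.toLeft) : X ∈ A.toRight.image (fun q => q.1.1) := by
  rcases hA (.inr ⟨⟨X, hX⟩, ⟨0, hs⟩⟩) with hmem | ⟨x | r, ha, hadj⟩
  · exact mem_image.2 ⟨_, mem_toRight.2 hmem, rfl⟩
  · exact absurd (mem_toLeft.2 ha) (disjoint_left.1 hXA (adj_inl_inr.1 hadj))
  · exact mem_image.2 ⟨r, mem_toRight.2 ha, congrArg Subtype.val (adj_inr_inr.1 hadj).2⟩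

lemma choose_card_compl_toLeft_le_card_toRight (hs : 0 < s) {A : Finset (HVert t m s)}
    (hA : IsDominatingSet (HGraph t m s) ↑A) : (t - #A.toLeft).choose m ≤ #A.toRight :=
  calc (t - #A.toLeft).choose m = #(powersetCard m A.toLeftᶜ) := by
        rw [card_powersetCard, card_compl, Fintype.card_fin]
    _ ≤ #(A.toRight.image fun q => q.1.1) := card_le_card fun X hX => by
        obtain ⟨hXA, hX⟩ := mem_powersetCard.1 hX
        exact mem_image_toRight_of_isDominatingSet hs hA hX (subset_compl_iff_disjoint_right.1 hXA)
    _ ≤ #A.toRight := card_image_le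

lemma le_card_of_isDominatingSet (hs : 0 < s) {A : Finset (HVert (2 * m - 1) m s)}
    (hA : IsDominatingSet (HGraph (2 * m - 1) m s) ↑A) : m ≤ #A := by
  have hcount := choose_card_compl_toLeft_le_card_toRight hs hA
  have hsplit : #A.toLeft + #A.toRight = #A := card_toLeft_add_card_toRight
  by_contra! hlt
  have hchoose := Nat.add_one_le_choose_add (m - 1 - #A.toLeft) (m := m) (by omega)
  rw [show m - 1 - #A.toLeft + m = 2 * m - 1 - #A.toLeft by omega] at hchoose
  omega

end HGraph

/-- for `s ≥ 1`, `m ≥ 2` and `t = 2m - 1`, the domination number of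
`H(t,s)` is `m`: every dominating set has at least `m` vertices, and every
`m`-subset of `V(T)` is a dominating set. -/
theorem HGraph_domination_number (m s : ℕ) (hm : 2 ≤ m) (hs : 1 ≤ s) :
    (∀ A : Finset (HVert (2 * m - 1) m s),
        IsDominatingSet (HGraph (2 * m - 1) m s) ↑A → m ≤ A.card) ∧
      ∀ X : Finset (Fin (2 * m - 1)), X.card = m →
        IsDominatingSet (HGraph (2 * m - 1) m s)
          {v | ∃ x ∈ X, v = Sum.inl x} :=
  ⟨fun _ hA => HGraph.le_card_of_isDominatingSet hs hA,
    fun _ hX => HGraph.isDominatingSet_inl hX (by omega) (by omega)⟩
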